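/- arXiv:1607.00816 — 2 statements merged into one kernel-verified Lean document; each statement's English description precedes it below -/
import Mathlib

section
/- Let δ > 0, t ∈ ℝ with ξ ~ U([0, δ]), and a, a' ∈ ℝ with |a - a'| ≤ δ - 2|t|. Then δ · max(|a - a'| - 4|t|, 0) ≤ E_ξ (d^t(a + ξ, a' + ξ))² ≤ δ · (|a - a'| + 4|t|), where d^t is the softened quantized distance with resolution δ. -/
open MeasureTheory

/-- The set `S^t` of pairs separated by the softened threshold at 0. -/
def Ssoft (t : ℝ) : Set (ℝ × ℝ) :=
  {p | p.1 < -t ∧ t < p.2} ∪ {p | t < p.1 ∧ p.2 < -t}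

/-- Softened quantized distance `d^t` of resolution `δ`. -/
noncomputable def dsoft (δ t a a' : ℝ) : ℝ :=
  δ * ∑' k : ℤ, Set.indicator (Ssoft t) (fun _ => (1 : ℝ)) (a - k * δ, a' - k * δ)

/-- Uniform probability measure on `[0, δ]`. -/
noncomputable def unif (δ : ℝ) : Measure ℝ :=
  (ENNReal.ofReal δ)⁻¹ • volume.restrict (Set.Icc 0 δ)

/-- The set of dithers where some `k` separates. -/
def Sset (δ t a a' : ℝ) : Set ℝ :=
  ⋃ k : ℤ, Set.Ioo ((k : ℝ) * δ - (max a a' - t)) ((k : ℝ) * δ - (min a a' + t))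

lemma mem_Ssoft_iff (δ t a a' x : ℝ) (k : ℤ) :
    ((a + x - k * δ, a' + x - k * δ) ∈ Ssoft t) ↔
      (min a a' + t + x < (k : ℝ) * δ ∧ (k : ℝ) * δ < max a a' - t + x) := by
  unfold Ssoft
  simp only [Set.mem_union, Set.mem_setOf_eq]
  rcases le_total a a' with hle | hle
  · rw [min_eq_left hle, max_eq_right hle]
    constructor
    · rintro (⟨h1, h2⟩ | ⟨h1, h2⟩) <;> constructor <;> linarith
    · rintro ⟨h1, h2⟩; left; constructor <;> linarith
  · rw [min_eq_right hle, max_eq_left hle]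
    constructor
    · rintro (⟨h1, h2⟩ | ⟨h1, h2⟩) <;> constructor <;> linarith
    · rintro ⟨h1, h2⟩; right; constructor <;> linarith

lemma unique_k (δ t a a' x : ℝ) (hδ : 0 < δ) (h : |a - a'| ≤ δ - 2 * |t|) (k k' : ℤ)
    (hk : min a a' + t + x < (k : ℝ) * δ ∧ (k : ℝ) * δ < max a a' - t + x)
    (hk' : min a a' + t + x < (k' : ℝ) * δ ∧ (k' : ℝ) * δ < max a a' - t + x) : k = k' := by
  have hMm : max a a' - min a a' = |a - a'| := (max_sub_min_eq_abs a a').trans (abs_sub_comm a' a)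
  have ht : -|t| ≤ t := neg_abs_le t
  have h1 : ((k : ℝ) - k') * δ < 1 * δ := by nlinarith [hk.1, hk.2, hk'.1, hk'.2]
  have h2 : ((k' : ℝ) - k) * δ < 1 * δ := by nlinarith [hk.1, hk.2, hk'.1, hk'.2]
  have h1' : ((k : ℝ) - k') < 1 := lt_of_mul_lt_mul_right (by linarith) hδ.le
  have h2' : ((k' : ℝ) - k) < 1 := lt_of_mul_lt_mul_right (by linarith) hδ.le
  have e1 : ((k - k' : ℤ) : ℝ) < 1 := by push_cast; linarith
  have e2 : ((k' - k : ℤ) : ℝ) < 1 := by push_cast; linarith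
  have e1' : (k - k' : ℤ) < 1 := by exact_mod_cast e1
  have e2' : (k' - k : ℤ) < 1 := by exact_mod_cast e2
  omega

lemma dsoft_eq (δ t a a' : ℝ) (hδ : 0 < δ) (h : |a - a'| ≤ δ - 2 * |t|) (x : ℝ) :
    dsoft δ t (a + x) (a' + x) = δ * Set.indicator (Sset δ t a a') (fun _ => (1 : ℝ)) x := by
  unfold dsoft
  congr 1
  have hmem : ∀ k : ℤ, x ∈ Set.Ioo ((k : ℝ) * δ - (max a a' - t)) ((k : ℝ) * δ - (min a a' + t)) ↔
      (min a a' + t + x < (k : ℝ) * δ ∧ (k : ℝ) * δ < max a a' - t + x) := by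
    intro k
    simp only [Set.mem_Ioo]
    constructor <;> rintro ⟨h1, h2⟩ <;> constructor <;> linarith
  by_cases hx : x ∈ Sset δ t a a'
  · obtain ⟨k₀, hk₀⟩ : ∃ k : ℤ,
        (min a a' + t + x < (k : ℝ) * δ ∧ (k : ℝ) * δ < max a a' - t + x) := by
      obtain ⟨k, hk⟩ := Set.mem_iUnion.mp hx
      exact ⟨k, (hmem k).mp hk⟩
    rw [Set.indicator_of_mem hx]
    rw [tsum_eq_single k₀]
    · rw [Set.indicator_of_mem]
      rw [mem_Ssoft_iff]
      exact hk₀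
    · intro k hk
      rw [Set.indicator_of_notMem]
      rw [mem_Ssoft_iff]
      intro hc
      exact hk (unique_k δ t a a' x hδ h k k₀ hc hk₀)
  · rw [Set.indicator_of_notMem hx]
    rw [show (0:ℝ) = ∑' _ : ℤ, (0:ℝ) by rw [tsum_zero]]
    apply tsum_congr
    intro k
    rw [Set.indicator_of_notMem]
    rw [mem_Ssoft_iff]
    intro hc
    exact hx (Set.mem_iUnion.mpr ⟨k, (hmem k).mpr hc⟩)

lemma Sset_measurable (δ t a a' : ℝ) : MeasurableSet (Sset δ t a a') :=
  MeasurableSet.iUnion fun _ => measurableSet_Ioo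

lemma Sset_periodic (δ t a a' : ℝ) :
    Function.Periodic (Set.indicator (Sset δ t a a') (fun _ => (1 : ℝ))) δ := by
  intro x
  have hiff : x + δ ∈ Sset δ t a a' ↔ x ∈ Sset δ t a a' := by
    unfold Sset
    simp only [Set.mem_iUnion, Set.mem_Ioo]
    constructor
    · rintro ⟨k, h1, h2⟩
      exact ⟨k - 1, by push_cast; constructor <;> linarith⟩
    · rintro ⟨k, h1, h2⟩
      exact ⟨k + 1, by push_cast; constructor <;> linarith⟩
  by_cases hx : x ∈ Sset δ t a a'
  · rw [Set.indicator_of_mem (hiff.mpr hx), Set.indicator_of_mem hx]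
  · rw [Set.indicator_of_notMem (fun hc => hx (hiff.mp hc)), Set.indicator_of_notMem hx]

lemma integral_indicator_eq (δ t a a' : ℝ) (hδ : 0 < δ) (h : |a - a'| ≤ δ - 2 * |t|) :
    ∫ x in Set.Icc (0:ℝ) δ, Set.indicator (Sset δ t a a') (fun _ => (1 : ℝ)) x
      = max (|a - a'| - 2 * t) 0 := by
  have hMm : max a a' - min a a' = |a - a'| := (max_sub_min_eq_abs a a').trans (abs_sub_comm a' a)
  have ht : -|t| ≤ t := neg_abs_le t
  have ht' : t ≤ |t| := le_abs_self t
  set L := |a - a'| - 2 * t with hL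
  rcases le_or_gt L 0 with hL0 | hL0
  · have hempty : Sset δ t a a' = ∅ := by
      unfold Sset
      simp only [Set.iUnion_eq_empty]
      intro k
      apply Set.Ioo_eq_empty
      intro hc
      linarith
    rw [hempty]
    simp [max_eq_right hL0]
  · have hLδ : L ≤ δ := by linarith
    have key : ∫ x in Set.Icc (0:ℝ) δ, Set.indicator (Sset δ t a a') (fun _ => (1 : ℝ)) x = L := by
      set f := Set.indicator (Sset δ t a a') (fun _ => (1 : ℝ)) with hf
      set s := t - max a a' with hs
      have h1 : ∫ x in Set.Icc (0:ℝ) δ, f x = ∫ x in (0:ℝ)..(0+δ), f x := by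
        rw [MeasureTheory.integral_Icc_eq_integral_Ioc, zero_add,
          intervalIntegral.integral_of_le hδ.le]
      have h2 : ∫ x in (0:ℝ)..(0+δ), f x = ∫ x in s..(s+δ), f x :=
        (Sset_periodic δ t a a').intervalIntegral_add_eq 0 s
      have hsx : ∀ k : ℤ, (k : ℝ) * δ - (max a a' - t) = k * δ + s := by intro k; ring
      have hsy : ∀ k : ℤ, (k : ℝ) * δ - (min a a' + t) = k * δ + s + L := by
        intro k; rw [hL, hs]; linarith [hMm]
      have hcong : Set.EqOn f (Set.indicator (Set.Ioo s (s + L)) (fun _ => (1 : ℝ)))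
          (Set.Ioc s (s + δ)) := by
        intro x hx
        simp only [Set.mem_Ioc] at hx
        have hiff : x ∈ Sset δ t a a' ↔ x ∈ Set.Ioo s (s + L) := by
          unfold Sset
          simp only [Set.mem_iUnion, Set.mem_Ioo]
          constructor
          · rintro ⟨k, hk1, hk2⟩
            rw [hsx k] at hk1
            rw [hsy k] at hk2
            have hk0 : k = 0 := by
              have c1 : (k : ℝ) * δ < δ := by linarith [hx.2]
              have c2 : -δ < (k : ℝ) * δ := by linarith [hx.1]
              have d1 : (k : ℝ) < 1 := lt_of_mul_lt_mul_right (by linarith) hδ.le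
              have d2 : (-1 : ℝ) < (k : ℝ) := by
                nlinarith
              have e1 : (k : ℤ) < 1 := by exact_mod_cast d1
              have e2 : (-1 : ℤ) < k := by exact_mod_cast d2
              omega
            subst hk0
            simp only [Int.cast_zero, zero_mul, zero_add] at hk1 hk2
            exact ⟨hk1, hk2⟩
          · rintro ⟨hk1, hk2⟩
            refine ⟨0, ?_, ?_⟩
            · rw [hsx 0]; push_cast; linarith
            · rw [hsy 0]; push_cast; linarith
        show f x = Set.indicator (Set.Ioo s (s + L)) (fun _ => (1:ℝ)) x
        by_cases hxx : x ∈ Sset δ t a a'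
        · rw [hf, Set.indicator_of_mem hxx, Set.indicator_of_mem (hiff.mp hxx)]
        · rw [hf, Set.indicator_of_notMem hxx,
            Set.indicator_of_notMem (fun hc => hxx (hiff.mpr hc))]
      have h3 : ∫ x in s..(s+δ), f x = ∫ x in Set.Ioc s (s+δ),
          Set.indicator (Set.Ioo s (s + L)) (fun _ => (1 : ℝ)) x := by
        rw [intervalIntegral.integral_of_le (by linarith : s ≤ s + δ)]
        exact MeasureTheory.setIntegral_congr_fun measurableSet_Ioc hcong
      have h4 : ∫ x in Set.Ioc s (s+δ),
          Set.indicator (Set.Ioo s (s + L)) (fun _ => (1 : ℝ)) x = L := by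
        rw [MeasureTheory.setIntegral_indicator measurableSet_Ioo]
        have hinter : Set.Ioc s (s + δ) ∩ Set.Ioo s (s + L) = Set.Ioo s (s + L) := by
          apply Set.inter_eq_right.mpr
          intro x hx
          simp only [Set.mem_Ioo] at hx
          exact ⟨hx.1, by linarith [hx.2]⟩
        rw [hinter, MeasureTheory.setIntegral_const, MeasureTheory.measureReal_def, Real.volume_Ioo, smul_eq_mul, mul_one,
          ENNReal.toReal_ofReal (by linarith)]
        ring
      rw [h1, h2, h3, h4]
    rw [key, max_eq_left hL0.le]

/-- Bounds on the expected squared dithered softened distance in the small-distance regime. -/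
theorem stmt8 (δ t a a' : ℝ) (hδ : 0 < δ) (h : |a - a'| ≤ δ - 2 * |t|) :
    δ * max (|a - a'| - 4 * |t|) 0 ≤ ∫ ξ, (dsoft δ t (a + ξ) (a' + ξ)) ^ 2 ∂(unif δ) ∧
    (∫ ξ, (dsoft δ t (a + ξ) (a' + ξ)) ^ 2 ∂(unif δ)) ≤ δ * (|a - a'| + 4 * |t|) := by
  have ht : -|t| ≤ t := neg_abs_le t
  have ht' : t ≤ |t| := le_abs_self t
  have htn : 0 ≤ |t| := abs_nonneg t
  have hDn : 0 ≤ |a - a'| := abs_nonneg _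
  have key : ∫ ξ, (dsoft δ t (a + ξ) (a' + ξ)) ^ 2 ∂(unif δ)
      = δ * max (|a - a'| - 2 * t) 0 := by
    have h1 : ∀ ξ : ℝ, (dsoft δ t (a + ξ) (a' + ξ)) ^ 2
        = δ ^ 2 * Set.indicator (Sset δ t a a') (fun _ => (1 : ℝ)) ξ := by
      intro ξ
      rw [dsoft_eq δ t a a' hδ h ξ, mul_pow]
      congr 1
      by_cases hx : ξ ∈ Sset δ t a a'
      · simp [Set.indicator_of_mem hx]
      · simp [Set.indicator_of_notMem hx]
    simp_rw [h1]
    rw [MeasureTheory.integral_const_mul]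
    unfold unif
    rw [MeasureTheory.integral_smul_measure]
    rw [integral_indicator_eq δ t a a' hδ h]
    rw [ENNReal.toReal_inv, ENNReal.toReal_ofReal hδ.le, smul_eq_mul]
    field_simp
  rw [key]
  constructor
  · apply mul_le_mul_of_nonneg_left _ hδ.le
    apply max_le_max _ le_rfl
    linarith
  · apply mul_le_mul_of_nonneg_left _ hδ.le
    apply max_le (by linarith) (by linarith)
end

section
/- Let δ > 0, m ∈ ℕ, Φ ∈ ℝ^{m×n}, and let Ξ ∈ ℝ^{m×2} have i.i.d. entries uniform on [0, δ]. For X ∈ ℝ^{n×2}, define A(X) = Q(ΦX + Ξ) entrywise with Q the mid-rise quantizer of resolution δ, and for B ∈ ℝ^{m×2} let ‖B‖_{1,∘} = Σ_{i=1}^m |B_{i1} B_{i2}|. Then for all X, X' ∈ ℝ^{n×2}: E_Ξ ‖A(X) - A(X')‖_{1,∘} = ‖Φ(X - X')‖_{1,∘}. In particular, for x, x' ∈ ℝⁿ and X = x·1₂ᵀ, X' = x'·1₂ᵀ: E_Ξ ‖A(X) - A(X')‖_{1,∘} = ‖Φ(x - x')‖₂². -/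
open MeasureTheory

/-- Mid-rise uniform quantizer of resolution `δ`. -/
noncomputable def quant (δ lam : ℝ) : ℝ := δ * (⌊lam / δ⌋ + 1/2)

/-- i.i.d. uniform dither on the entries of an `m × 2` matrix. -/
noncomputable def unifMat (δ : ℝ) (m : ℕ) : Measure (Fin m × Fin 2 → ℝ) :=
  Measure.pi fun _ => unif δ

lemma quant_mono {δ : ℝ} (hδ : 0 < δ) : Monotone (quant δ) := by
  intro x y h
  unfold quant
  have : (⌊x / δ⌋ : ℝ) ≤ (⌊y / δ⌋ : ℝ) := by
    exact_mod_cast Int.floor_le_floor (by gcongr)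
  nlinarith

lemma floor_comp_intervalIntegrable (c : ℝ) (a b : ℝ) :
    IntervalIntegrable (fun t : ℝ => ((⌊c + t⌋ : ℤ) : ℝ)) volume a b :=
  Monotone.intervalIntegrable (fun x y h => by
    exact_mod_cast Int.floor_le_floor (by linarith))

lemma fract_comp_intervalIntegrable (c : ℝ) (a b : ℝ) :
    IntervalIntegrable (fun t : ℝ => Int.fract (c + t)) volume a b := by
  have : (fun t : ℝ => Int.fract (c + t)) =
      fun t : ℝ => (c + t) - ((⌊c + t⌋ : ℤ) : ℝ) := funext fun t => rfl
  rw [this]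
  exact ((continuous_const.add continuous_id).intervalIntegrable a b).sub
    (floor_comp_intervalIntegrable c a b)

lemma integral_fract_zero_one : ∫ t in (0:ℝ)..1, Int.fract t = 1/2 := by
  have h : ∫ t in (0:ℝ)..1, Int.fract t = ∫ t in (0:ℝ)..1, t := by
    apply intervalIntegral.integral_congr_ae
    have h1 : (volume : Measure ℝ) {(1:ℝ)} = 0 := measure_singleton 1
    filter_upwards [measure_eq_zero_iff_ae_notMem.mp h1] with t ht hmem
    rw [Set.uIoc_of_le (by norm_num : (0:ℝ) ≤ 1)] at hmem
    exact Int.fract_eq_self.mpr ⟨hmem.1.le, lt_of_le_of_ne hmem.2 ht⟩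
  rw [h, integral_id]; norm_num

lemma integral_floor_comp (c : ℝ) : ∫ t in (0:ℝ)..1, ((⌊c + t⌋ : ℤ) : ℝ) = c := by
  have h : ∀ t : ℝ, ((⌊c + t⌋ : ℤ) : ℝ) = (c + t) - Int.fract (c + t) := by
    intro t; rw [Int.fract]; ring
  simp_rw [h]
  rw [intervalIntegral.integral_sub ((Continuous.intervalIntegrable (by continuity) 0 1))
    (fract_comp_intervalIntegrable c 0 1)]
  have h2 : ∫ t in (0:ℝ)..1, Int.fract (c + t) = 1/2 := by
    rw [intervalIntegral.integral_comp_add_left (fun x => Int.fract x) c]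
    have := (Int.fract_periodic ℝ).intervalIntegral_add_eq c 0
    simp only [zero_add] at this
    rw [add_zero] at *
    rw [this, integral_fract_zero_one]
  rw [h2]
  have h3 : ∫ t in (0:ℝ)..1, (c + t) = c + 1/2 := by
    rw [intervalIntegral.integral_add intervalIntegrable_const
      intervalIntegral.intervalIntegrable_id, integral_id, intervalIntegral.integral_const]
    norm_num
  rw [h3]; ring

lemma integral_floor_div (δ : ℝ) (hδ : 0 < δ) (a : ℝ) :
    ∫ ξ in (0:ℝ)..δ, ((⌊(a + ξ) / δ⌋ : ℤ) : ℝ) = a := by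
  have h : ∀ ξ : ℝ, (a + ξ) / δ = a / δ + ξ / δ := fun ξ => by ring
  simp_rw [h]
  rw [intervalIntegral.integral_comp_div (f := fun t => ((⌊a / δ + t⌋ : ℤ) : ℝ)) hδ.ne',
    zero_div, div_self hδ.ne', integral_floor_comp, smul_eq_mul, mul_div_cancel₀ _ hδ.ne']

lemma floor_div_intervalIntegrable (δ : ℝ) (hδ : 0 < δ) (a b c : ℝ) :
    IntervalIntegrable (fun ξ : ℝ => ((⌊(c + ξ) / δ⌋ : ℤ) : ℝ)) volume a b :=
  Monotone.intervalIntegrable (fun x y h => by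
    exact_mod_cast Int.floor_le_floor (by gcongr))

lemma quant_diff_integral (δ : ℝ) (hδ : 0 < δ) (a a' : ℝ) :
    ∫ ξ in (0:ℝ)..δ, (quant δ (a + ξ) - quant δ (a' + ξ)) = δ * (a - a') := by
  have h : ∀ ξ : ℝ, quant δ (a + ξ) - quant δ (a' + ξ)
      = δ * (((⌊(a + ξ) / δ⌋ : ℤ) : ℝ) - ((⌊(a' + ξ) / δ⌋ : ℤ) : ℝ)) := by
    intro ξ; unfold quant; ring
  simp_rw [h]
  rw [intervalIntegral.integral_const_mul,
    intervalIntegral.integral_sub (floor_div_intervalIntegrable δ hδ 0 δ a)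
      (floor_div_intervalIntegrable δ hδ 0 δ a'),
    integral_floor_div δ hδ a, integral_floor_div δ hδ a']

instance unif_prob (δ : ℝ) [Fact (0 < δ)] : IsProbabilityMeasure (unif δ) := by
  have hδ : 0 < δ := Fact.out
  constructor
  rw [unif, Measure.smul_apply, Measure.restrict_apply MeasurableSet.univ, Set.univ_inter,
    Real.volume_Icc, smul_eq_mul, sub_zero]
  rw [ENNReal.inv_mul_cancel (by simp [hδ]) ENNReal.ofReal_ne_top]

lemma quant_integrable (δ : ℝ) (hδ : 0 < δ) (a a' : ℝ) :
    Integrable (fun ξ => |quant δ (a + ξ) - quant δ (a' + ξ)|) (unif δ) := by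
  have h1 : IntegrableOn (fun ξ => quant δ (a + ξ) - quant δ (a' + ξ)) (Set.Icc 0 δ) volume := by
    apply Integrable.sub
    · exact ((quant_mono hδ).comp (fun x y h => by simpa using h : Monotone (a + ·))).monotoneOn
        _ |>.integrableOn_isCompact isCompact_Icc
    · exact ((quant_mono hδ).comp (fun x y h => by simpa using h : Monotone (a' + ·))).monotoneOn
        _ |>.integrableOn_isCompact isCompact_Icc
  rw [unif]
  exact (h1.abs).smul_measure (by simp [hδ])

lemma quant_integral_1d (δ : ℝ) (hδ : 0 < δ) (a a' : ℝ) :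
    ∫ ξ, |quant δ (a + ξ) - quant δ (a' + ξ)| ∂(unif δ) = |a - a'| := by
  suffices H : ∀ b b' : ℝ, b' ≤ b →
      ∫ ξ, |quant δ (b + ξ) - quant δ (b' + ξ)| ∂(unif δ) = |b - b'| by
    rcases le_total a' a with h | h
    · exact H a a' h
    · have := H a' a h
      simp_rw [abs_sub_comm (quant δ (a' + _))] at this
      rw [this, abs_sub_comm]
  intro b b' h
  have hpt : (fun ξ => |quant δ (b + ξ) - quant δ (b' + ξ)|)
      = fun ξ => quant δ (b + ξ) - quant δ (b' + ξ) := by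
    funext ξ
    exact abs_of_nonneg (sub_nonneg.mpr (quant_mono hδ (by linarith)))
  rw [hpt, unif, integral_smul_measure]
  have hInt : ∫ ξ in Set.Icc (0:ℝ) δ, (quant δ (b + ξ) - quant δ (b' + ξ)) = δ * (b - b') := by
    rw [MeasureTheory.integral_Icc_eq_integral_Ioc,
      ← intervalIntegral.integral_of_le hδ.le]
    exact quant_diff_integral δ hδ b b'
  rw [hInt, ENNReal.toReal_inv, ENNReal.toReal_ofReal hδ.le, smul_eq_mul, abs_of_nonneg
    (by linarith : (0:ℝ) ≤ b - b')]
  field_simp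

open MeasureTheory.Measure in
theorem my_integrable_fin_prod {n : ℕ} (μ : Fin n → Measure ℝ) [∀ i, SigmaFinite (μ i)]
    {f : Fin n → ℝ → ℝ} (hf : ∀ i, Integrable (f i) (μ i)) :
    Integrable (fun x : Fin n → ℝ => ∏ i, f i (x i)) (Measure.pi μ) := by
  induction n with
  | zero =>
      have : IsFiniteMeasure (Measure.pi μ) :=
        ⟨by rw [Measure.pi_empty_univ]; exact ENNReal.one_lt_top⟩
      simp only [Finset.univ_eq_empty, Finset.prod_empty]
      exact integrable_const 1
  | succ n n_ih =>
      have := ((measurePreserving_piFinSuccAbove μ 0).symm)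
      rw [← this.integrable_comp_emb (MeasurableEquiv.measurableEmbedding _)]
      simp_rw [MeasurableEquiv.piFinSuccAbove_symm_apply, Fin.insertNthEquiv,
        Fin.prod_univ_succ, Fin.insertNth_zero]
      simp only [Fin.zero_succAbove, Function.comp_def, Fin.cons_zero, Fin.cons_succ,
        Equiv.coe_fn_mk]
      have : Integrable (fun x : Fin n → ℝ => ∏ j, f (Fin.succ j) (x j))
          (Measure.pi fun j => μ (Fin.succ j)) := n_ih _ (fun i => hf _)
      exact Integrable.mul_prod (hf 0) this

open MeasureTheory.Measure in
theorem my_integral_fin_prod {n : ℕ} (μ : Fin n → Measure ℝ) [∀ i, SigmaFinite (μ i)]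
    (f : Fin n → ℝ → ℝ) :
    ∫ x : Fin n → ℝ, ∏ i, f i (x i) ∂(Measure.pi μ) = ∏ i, ∫ x, f i x ∂(μ i) := by
  induction n with
  | zero =>
      simp only [Finset.univ_eq_empty, Finset.prod_empty, integral_const,
        measureReal_def, Measure.pi_empty_univ, ENNReal.toReal_one, smul_eq_mul, mul_one, one_smul]
  | succ n n_ih =>
      calc
        _ = ∫ x : ℝ × (Fin n → ℝ), f 0 x.1 * ∏ i : Fin n, f (Fin.succ i) (x.2 i)
            ∂((μ 0).prod (Measure.pi fun j => μ (Fin.succ j))) := by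
          rw [← ((measurePreserving_piFinSuccAbove μ 0).symm).integral_comp']
          simp_rw [MeasurableEquiv.piFinSuccAbove_symm_apply, Fin.insertNthEquiv,
            Fin.prod_univ_succ, Fin.insertNth_zero, Equiv.coe_fn_mk, Fin.cons_succ,
            Fin.zero_succAbove, cast_eq, Fin.cons_zero]
        _ = (∫ x, f 0 x ∂(μ 0)) * ∏ i : Fin n, ∫ x, f (Fin.succ i) x ∂(μ (Fin.succ i)) := by
          rw [← n_ih, ← integral_prod_mul]
        _ = ∏ i, ∫ x, f i x ∂(μ i) := by rw [Fin.prod_univ_succ]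

open MeasureTheory.Measure in
theorem my_integrable_prod {ι : Type*} [Fintype ι] (μ : ι → Measure ℝ) [∀ i, SigmaFinite (μ i)]
    {f : ι → ℝ → ℝ} (hf : ∀ i, Integrable (f i) (μ i)) :
    Integrable (fun x : ι → ℝ => ∏ i, f i (x i)) (Measure.pi μ) := by
  let e := (Fintype.equivFin ι).symm
  rw [← (measurePreserving_piCongrLeft μ e).integrable_comp_emb
    (MeasurableEquiv.measurableEmbedding _)]
  simp_rw [← e.prod_comp, MeasurableEquiv.coe_piCongrLeft, Function.comp_def,
    Equiv.piCongrLeft_apply_apply]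
  exact my_integrable_fin_prod _ (fun i => hf _)

open MeasureTheory.Measure in
theorem my_integral_prod {ι : Type*} [Fintype ι] (μ : ι → Measure ℝ) [∀ i, SigmaFinite (μ i)]
    (f : ι → ℝ → ℝ) :
    ∫ x : ι → ℝ, ∏ i, f i (x i) ∂(Measure.pi μ) = ∏ i, ∫ x, f i x ∂(μ i) := by
  let e := (Fintype.equivFin ι).symm
  rw [← (measurePreserving_piCongrLeft μ e).integral_comp']
  simp_rw [← e.prod_comp, MeasurableEquiv.coe_piCongrLeft, Equiv.piCongrLeft_apply_apply,
    my_integral_fin_prod]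


lemma main_core (δ : ℝ) (hδ : 0 < δ) (m : ℕ) (a a' b b' : Fin m → ℝ) :
    ∫ Ξ, ∑ i, |(quant δ (a i + Ξ (i, 0)) - quant δ (a' i + Ξ (i, 0))) *
        (quant δ (b i + Ξ (i, 1)) - quant δ (b' i + Ξ (i, 1)))| ∂(unifMat δ m)
    = ∑ i, |(a i - a' i) * (b i - b' i)| := by
  haveI : Fact (0 < δ) := ⟨hδ⟩
  set g : Fin m → (Fin m × Fin 2) → ℝ → ℝ := fun i k ξ =>
    if k = (i, 0) then |quant δ (a i + ξ) - quant δ (a' i + ξ)|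
    else if k = (i, 1) then |quant δ (b i + ξ) - quant δ (b' i + ξ)|
    else 1 with hg
  have hne : ∀ i : Fin m, ((i, 0) : Fin m × Fin 2) ≠ (i, 1) := by
    intro i h; simpa using congrArg Prod.snd h
  have hg_int : ∀ i k, Integrable (g i k) (unif δ) := by
    intro i k
    rw [hg]; dsimp only
    split_ifs
    · exact quant_integrable δ hδ (a i) (a' i)
    · exact quant_integrable δ hδ (b i) (b' i)
    · exact integrable_const 1
  have hprod : ∀ (i : Fin m) (Ξ : Fin m × Fin 2 → ℝ),
      |(quant δ (a i + Ξ (i, 0)) - quant δ (a' i + Ξ (i, 0))) *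
        (quant δ (b i + Ξ (i, 1)) - quant δ (b' i + Ξ (i, 1)))|
      = ∏ k, g i k (Ξ k) := by
    intro i Ξ
    rw [← Finset.prod_subset (Finset.subset_univ ({(i, 0), (i, 1)} : Finset (Fin m × Fin 2)))
      (fun k _ hk => by
        simp only [Finset.mem_insert, Finset.mem_singleton, not_or] at hk
        simp [hg, hk.1, hk.2]),
      Finset.prod_pair (hne i)]
    simp [hg, abs_mul, Prod.ext_iff]
  have key : ∀ i : Fin m,
      ∫ Ξ, |(quant δ (a i + Ξ (i, 0)) - quant δ (a' i + Ξ (i, 0))) *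
        (quant δ (b i + Ξ (i, 1)) - quant δ (b' i + Ξ (i, 1)))| ∂(unifMat δ m)
      = |(a i - a' i) * (b i - b' i)| := by
    intro i
    calc ∫ Ξ, |(quant δ (a i + Ξ (i, 0)) - quant δ (a' i + Ξ (i, 0))) *
          (quant δ (b i + Ξ (i, 1)) - quant δ (b' i + Ξ (i, 1)))| ∂(unifMat δ m)
        = ∫ Ξ, ∏ k, g i k (Ξ k) ∂(unifMat δ m) := by
          congr 1; funext Ξ; exact hprod i Ξ
      _ = ∏ k, ∫ ξ, g i k ξ ∂(unif δ) := my_integral_prod _ _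
      _ = |(a i - a' i) * (b i - b' i)| := by
          rw [← Finset.prod_subset
            (Finset.subset_univ ({(i, 0), (i, 1)} : Finset (Fin m × Fin 2)))
            (fun k _ hk => by
              simp only [Finset.mem_insert, Finset.mem_singleton, not_or] at hk
              simp [hg, hk.1, hk.2]),
            Finset.prod_pair (hne i)]
          have h1 : ∫ ξ, g i (i, 0) ξ ∂(unif δ) = |a i - a' i| := by
            have : g i (i, 0) = fun ξ => |quant δ (a i + ξ) - quant δ (a' i + ξ)| := by
              funext ξ; simp [hg]
            rw [this]
            exact quant_integral_1d δ hδ (a i) (a' i)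
          have h2 : ∫ ξ, g i (i, 1) ξ ∂(unif δ) = |b i - b' i| := by
            have : g i (i, 1) = fun ξ => |quant δ (b i + ξ) - quant δ (b' i + ξ)| := by
              funext ξ; simp [hg, Prod.ext_iff]
            rw [this]
            exact quant_integral_1d δ hδ (b i) (b' i)
          rw [h1, h2, abs_mul]
  rw [integral_finset_sum _ (fun i _ => by
    have : (fun Ξ : Fin m × Fin 2 → ℝ =>
        |(quant δ (a i + Ξ (i, 0)) - quant δ (a' i + Ξ (i, 0))) *
          (quant δ (b i + Ξ (i, 1)) - quant δ (b' i + Ξ (i, 1)))|)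
        = fun Ξ => ∏ k, g i k (Ξ k) := funext (hprod i)
    rw [this]
    exact my_integrable_prod _ (hg_int i))]
  exact Finset.sum_congr rfl (fun i _ => key i)

/-- In expectation, the bi-dithered quantized map preserves the `(1,∘)` pre-metric of the
linear map; in particular, on replicated columns it recovers `‖Φ(x - x')‖₂²`. -/
theorem stmt16 (δ : ℝ) (hδ : 0 < δ) (m n : ℕ) (Φ : Matrix (Fin m) (Fin n) ℝ) :
    (∀ X X' : Matrix (Fin n) (Fin 2) ℝ,
      (∫ Ξ, ∑ i,
          |(quant δ ((Φ * X) i 0 + Ξ (i, 0)) - quant δ ((Φ * X') i 0 + Ξ (i, 0))) *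
            (quant δ ((Φ * X) i 1 + Ξ (i, 1)) - quant δ ((Φ * X') i 1 + Ξ (i, 1)))|
        ∂(unifMat δ m))
      = ∑ i, |(Φ * (X - X')) i 0 * (Φ * (X - X')) i 1|) ∧
    (∀ x x' : Fin n → ℝ,
      (∫ Ξ, ∑ i,
          |(quant δ (Φ.mulVec x i + Ξ (i, 0)) - quant δ (Φ.mulVec x' i + Ξ (i, 0))) *
            (quant δ (Φ.mulVec x i + Ξ (i, 1)) - quant δ (Φ.mulVec x' i + Ξ (i, 1)))|
        ∂(unifMat δ m))
      = ∑ i, (Φ.mulVec (x - x') i) ^ 2) := by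
  constructor
  · intro X X'
    have h := main_core δ hδ m (fun i => (Φ * X) i 0) (fun i => (Φ * X') i 0)
      (fun i => (Φ * X) i 1) (fun i => (Φ * X') i 1)
    refine h.trans ?_
    refine Finset.sum_congr rfl (fun i _ => ?_)
    simp [Matrix.mul_sub, Matrix.sub_apply]
  · intro x x'
    have h := main_core δ hδ m (Φ.mulVec x) (Φ.mulVec x') (Φ.mulVec x) (Φ.mulVec x')
    refine h.trans ?_
    refine Finset.sum_congr rfl (fun i _ => ?_)
    have hv : Φ.mulVec x i - Φ.mulVec x' i = Φ.mulVec (x - x') i := by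
      rw [Matrix.mulVec_sub, Pi.sub_apply]
    rw [hv, abs_mul, abs_mul_abs_self, ← pow_two]
end
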